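/- arXiv:2302.13319 — 3 statements merged into one kernel-verified Lean document; each statement's English description precedes it below -/
import Mathlib

section
/- Let the joint law of (x, z) on ℝ^d × {0,1} be the mixture p·(N(μ_1, Σ) ⊗ δ_1) + (1−p)·(N(μ_0, Σ) ⊗ δ_0) for some p ∈ [0,1], means μ_0, μ_1 ∈ ℝ^d and a shared symmetric positive semidefinite covariance matrix Σ ∈ ℝ^{d×d}. If U ∈ ℝ^{d×k} satisfies Uᵀμ_0 = Uᵀμ_1, then the random variables Uᵀx and z are independent; consequently, for every measurable function h: ℝ^k → ℝ, h(Uᵀx) and z are independent. -/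
open Matrix MeasureTheory ProbabilityTheory
open scoped ENNReal

/-- The positive semidefinite square root, as `Matrix.PosSemidef.sqrt` was defined in the older Mathlib. -/
noncomputable def Matrix.PosSemidef.sqrt {n : Type*} [Fintype n] [DecidableEq n]
    {A : Matrix n n ℝ} (hA : A.PosSemidef) : Matrix n n ℝ :=
  hA.1.eigenvectorUnitary.1 * diagonal ((↑) ∘ (√·) ∘ hA.1.eigenvalues) *
    (star hA.1.eigenvectorUnitary : Matrix n n ℝ)

/-- The multivariate Gaussian measure `N(μ, Σ)` on `ℝ^d`, defined as the pushforward of a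
product of `d` independent standard Gaussians under the affine map `x ↦ μ + √Σ · x`,
where `√Σ` is the positive semidefinite square root of the (symmetric positive semidefinite)
covariance matrix `Σ`. -/
noncomputable def multivariateGaussian {d : ℕ} (μ : Fin d → ℝ)
    {S : Matrix (Fin d) (Fin d) ℝ} (hS : S.PosSemidef) : Measure (Fin d → ℝ) :=
  (Measure.pi fun _ : Fin d => gaussianReal 0 1).map fun x => μ + hS.sqrt *ᵥ x

/-! Both Gaussian components are images of the same standard Gaussian under affine maps that
differ only by the translation `μ₁ - μ₀`, which `Uᵀ` annihilates. So `Uᵀx` has the same law under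
both components, and the joint law of `(Uᵀx, z)` is the product of that law with the law of
`z`. -/

namespace MeasureTheory.Measure

variable {α β γ : Type*} [MeasurableSpace α] [MeasurableSpace β] [MeasurableSpace γ]
  {μ₀ μ₁ : Measure α} {f : α → γ}

lemma map_mixture_prod_dirac [SFinite μ₀] [SFinite μ₁] (hf : Measurable f)
    (hμ : μ₀.map f = μ₁.map f) (p : ℝ≥0∞) (b₀ b₁ : β) :
    (p • μ₁.prod (dirac b₁) + (1 - p) • μ₀.prod (dirac b₀)).map (fun ω => (f ω.1, ω.2)) =
      (μ₀.map f).prod (p • dirac b₁ + (1 - p) • dirac b₀) := by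
  have hmap (μ : Measure α) [SFinite μ] (b : β) :
      (μ.prod (dirac b)).map (fun ω => (f ω.1, ω.2)) = (μ.map f).prod (dirac b) := by
    rw [← map_id (μ := dirac b), map_prod_map μ _ hf measurable_id, map_id]
    rfl
  rw [Measure.map_add _ _ (by fun_prop), Measure.map_smul, Measure.map_smul, hmap, hmap,
    prod_add, prod_smul_right, prod_smul_right, hμ, add_comm]

end MeasureTheory.Measure

namespace ProbabilityTheory

variable {α β γ : Type*} [MeasurableSpace α] [MeasurableSpace β] [MeasurableSpace γ]
  {μ₀ μ₁ : Measure α} {f : α → γ}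

theorem indepFun_comp_fst_snd_mixture [IsProbabilityMeasure μ₀] [SFinite μ₁]
    (hf : Measurable f) (hμ : μ₀.map f = μ₁.map f) {p : ℝ≥0∞} (hp : p ≤ 1) (b₀ b₁ : β) :
    IndepFun (fun ω => f ω.1) Prod.snd
      (p • μ₁.prod (Measure.dirac b₁) + (1 - p) • μ₀.prod (Measure.dirac b₀)) := by
  set m := p • μ₁.prod (Measure.dirac b₁) + (1 - p) • μ₀.prod (Measure.dirac b₀)
  set τ := p • Measure.dirac b₁ + (1 - p) • Measure.dirac b₀
  have : IsProbabilityMeasure τ := ⟨by simp [τ, add_tsub_cancel_of_le hp]⟩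
  have : IsProbabilityMeasure (μ₀.map f) := Measure.isProbabilityMeasure_map hf.aemeasurable
  have hlaw := Measure.map_mixture_prod_dirac hf hμ p b₀ b₁
  have hpair : Measurable fun ω : α × β => (f ω.1, ω.2) := by fun_prop
  have hX : m.map (fun ω => f ω.1) = μ₀.map f := by
    rw [← Measure.fst_prod (μ := μ₀.map f) (ν := τ), ← hlaw, Measure.fst, Measure.map_map
      measurable_fst hpair]
    rfl
  have hZ : m.map Prod.snd = τ := by
    rw [← Measure.snd_prod (μ := μ₀.map f) (ν := τ), ← hlaw, Measure.snd, Measure.map_map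
      measurable_snd hpair]
    rfl
  rw [indepFun_iff_map_prod_eq_prod_map_map' (by fun_prop) (by fun_prop)
    (hX ▸ inferInstance) (hZ ▸ inferInstance), hX, hZ]
  exact hlaw

end ProbabilityTheory

lemma Matrix.measurable_mulVec {m n : Type*} [Fintype m] [Fintype n] (A : Matrix m n ℝ) :
    Measurable (A *ᵥ ·) :=
  (continuous_const.matrix_mulVec continuous_id).measurable

section MultivariateGaussian

variable {d : ℕ} {S : Matrix (Fin d) (Fin d) ℝ}

instance (μ : Fin d → ℝ) (hS : S.PosSemidef) :
    IsProbabilityMeasure (_root_.multivariateGaussian μ hS) :=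
  Measure.isProbabilityMeasure_map (measurable_const.add (measurable_mulVec _)).aemeasurable

lemma multivariateGaussian_map_mulVec_eq {m : Type*} [Fintype m] {μ₀ μ₁ : Fin d → ℝ}
    (hS : S.PosSemidef) {A : Matrix m (Fin d) ℝ} (hA : A *ᵥ μ₀ = A *ᵥ μ₁) :
    (_root_.multivariateGaussian μ₀ hS).map (A *ᵥ ·) =
      (_root_.multivariateGaussian μ₁ hS).map (A *ᵥ ·) := by
  have hshift (μ : Fin d → ℝ) : Measurable fun x => μ + hS.sqrt *ᵥ x :=
    measurable_const.add (measurable_mulVec _)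
  simp only [_root_.multivariateGaussian]
  rw [Measure.map_map (measurable_mulVec A) (hshift μ₀),
    Measure.map_map (measurable_mulVec A) (hshift μ₁)]
  congr 1
  funext x
  simp only [Function.comp_apply, mulVec_add, hA]

end MultivariateGaussian

/-- Proposition 1: Let the joint law of `(x, z)` on `ℝ^d × {0,1}` be the mixture
`p·(N(μ₁, Σ) ⊗ δ₁) + (1−p)·(N(μ₀, Σ) ⊗ δ₀)` with shared symmetric positive semidefinite
covariance `Σ`. If `Uᵀμ₀ = Uᵀμ₁`, then `Uᵀx` and `z` are independent, and consequently
`h(Uᵀx)` and `z` are independent for every measurable `h : ℝ^k → ℝ`. -/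
theorem indepFun_of_proj_means_eq {d k : ℕ} (μ₀ μ₁ : Fin d → ℝ)
    {S : Matrix (Fin d) (Fin d) ℝ} (hS : S.PosSemidef)
    (p : ℝ≥0∞) (hp : p ≤ 1)
    (U : Matrix (Fin d) (Fin k) ℝ) (hU : Uᵀ *ᵥ μ₀ = Uᵀ *ᵥ μ₁) :
    IndepFun (fun ω : (Fin d → ℝ) × Fin 2 => Uᵀ *ᵥ ω.1) Prod.snd
        (p • (multivariateGaussian μ₁ hS).prod (Measure.dirac (1 : Fin 2)) +
          (1 - p) • (multivariateGaussian μ₀ hS).prod (Measure.dirac (0 : Fin 2))) ∧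
      ∀ h : (Fin k → ℝ) → ℝ, Measurable h →
        IndepFun (fun ω : (Fin d → ℝ) × Fin 2 => h (Uᵀ *ᵥ ω.1)) Prod.snd
          (p • (multivariateGaussian μ₁ hS).prod (Measure.dirac (1 : Fin 2)) +
            (1 - p) • (multivariateGaussian μ₀ hS).prod (Measure.dirac (0 : Fin 2))) := by
  have hproj := indepFun_comp_fst_snd_mixture (measurable_mulVec Uᵀ)
    (multivariateGaussian_map_mulVec_eq hS hU) hp (0 : Fin 2) 1
  exact ⟨hproj, fun h hh => hproj.comp hh measurable_id⟩
end

section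
/- Let n' ≥ 3 and consider the dataset of 2n' points in ℝ² given by x_1 = … = x_{n'} = 0 with labels z_1 = … = z_{n'} = 0, and x_{n'+j} = (cos(2πj/n'), sin(2πj/n')) for j = 1,…,n' with labels z_{n'+1} = … = z_{2n'} = 1. Then for every nonzero vector u ∈ ℝ², at most 2 of the indices j ∈ {1,…,n'} satisfy uᵀx_{n'+j} = 0, and consequently the function h: ℝ → ℝ with h(t) = 1 if t ≠ 0 and h(t) = 0 if t = 0 satisfies h(uᵀx_i) = z_i for at least 2n' − 2 of the 2n' indices i. -/
/-!
The points `x (n' + j)` are distinct unit vectors (the `n'`-th roots of unity), while the line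
`uᗮ` meets the unit circle only in two antipodal points, so at most two of them are orthogonal
to `u`. The indicator `1[t ≠ 0]` classifies every other point correctly, the origin included.
-/

theorem eq_or_eq_neg_of_dotProduct_eq_zero {u v w : Fin 2 → ℝ} (hu : u ≠ 0)
    (hv : u ⬝ᵥ v = 0) (hw : u ⬝ᵥ w = 0) (hvv : v ⬝ᵥ v = 1) (hww : w ⬝ᵥ w = 1) :
    v = w ∨ v = -w := by
  simp only [dotProduct, Fin.sum_univ_two] at hv hw hvv hww
  have hcross : v 0 * w 1 - v 1 * w 0 = 0 := by
    have h0 : u 0 * (v 0 * w 1 - v 1 * w 0) = 0 := by linear_combination w 1 * hv - v 1 * hw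
    have h1 : u 1 * (v 0 * w 1 - v 1 * w 0) = 0 := by linear_combination v 0 * hw - w 0 * hv
    by_contra hne
    exact hu (funext fun i => by fin_cases i <;> simp_all)
  set d := v 0 * w 0 + v 1 * w 1
  -- Lagrange's identity `d² + cross² = ‖v‖² ‖w‖²`
  have hd : d ^ 2 = 1 := by
    linear_combination (w 0 * w 0 + w 1 * w 1) * hvv + hww - (v 0 * w 1 - v 1 * w 0) * hcross
  have hvd : v = d • w := by
    have hsq : (v 0 - d * w 0) ^ 2 + (v 1 - d * w 1) ^ 2 = 0 := by
      linear_combination hvv + (d ^ 2) * hww - hd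
    obtain ⟨h0, h1⟩ := (add_eq_zero_iff_of_nonneg (sq_nonneg _) (sq_nonneg _)).mp hsq
    rw [pow_eq_zero_iff two_ne_zero] at h0 h1
    funext i
    fin_cases i <;> simp <;> linarith
  rcases sq_eq_one_iff.mp hd with h | h <;> simp [hvd, h]

theorem injOn_cos_sin_two_pi_mul_div (n : ℕ) :
    Set.InjOn (fun j : ℕ => ![Real.cos (2 * Real.pi * j / n), Real.sin (2 * Real.pi * j / n)])
      (Finset.Icc 1 n) := by
  intro i hi j hj hij
  simp only [Finset.coe_Icc, Set.mem_Icc] at hi hj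
  have hn : (n : ℝ) ≠ 0 := by norm_cast; omega
  have hangle := Real.Angle.cos_sin_inj (congrFun hij 0) (congrFun hij 1)
  obtain ⟨k, hk⟩ := Real.Angle.angle_eq_iff_two_pi_dvd_sub.mp hangle
  have hdiff_real : ((i : ℤ) - j : ℝ) = n * k := by
    field_simp at hk
    exact_mod_cast hk
  have hdiff : (i : ℤ) - j = n * k := by exact_mod_cast hdiff_real
  have := Int.eq_zero_of_abs_lt_dvd (m := n) ⟨k, hdiff⟩ (by rw [abs_lt]; omega)
  omega

theorem Finset.card_filter_dotProduct_eq_zero_le_two {ι : Type*} (s : Finset ι)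
    (f : ι → Fin 2 → ℝ) (hf : Set.InjOn f s) (hunit : ∀ i ∈ s, f i ⬝ᵥ f i = 1)
    {u : Fin 2 → ℝ} (hu : u ≠ 0) : (s.filter fun i => u ⬝ᵥ f i = 0).card ≤ 2 := by
  obtain hempty | ⟨j, hj⟩ := (s.filter fun i => u ⬝ᵥ f i = 0).eq_empty_or_nonempty
  · rw [hempty]; simp
  rw [Finset.mem_filter] at hj
  calc _ ≤ ({f j, -f j} : Finset (Fin 2 → ℝ)).card := by
        refine Finset.card_le_card_of_injOn f (fun i hi => ?_)
          (hf.mono (Finset.coe_subset.mpr (Finset.filter_subset _ _)))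
        rw [Finset.mem_coe, Finset.mem_filter] at hi
        simpa using
          eq_or_eq_neg_of_dotProduct_eq_zero hu hi.2 hj.2 (hunit i hi.1) (hunit j hj.1)
    _ ≤ 2 := Finset.card_le_two

theorem strict_fair_pca_infeasible_general (n' : ℕ)
    (x : ℕ → Fin 2 → ℝ)
    (hx0 : ∀ i, 1 ≤ i → i ≤ n' → x i = 0)
    (hx1 : ∀ j, 1 ≤ j → j ≤ n' →
      x (n' + j) = ![Real.cos (2 * Real.pi * j / n'), Real.sin (2 * Real.pi * j / n')])
    (z : ℕ → ℝ)
    (hz0 : ∀ i, 1 ≤ i → i ≤ n' → z i = 0)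
    (hz1 : ∀ i, n' + 1 ≤ i → i ≤ 2 * n' → z i = 1)
    (h : ℝ → ℝ) (hh : ∀ t : ℝ, h t = if t = 0 then 0 else 1) :
    ∀ u : Fin 2 → ℝ, u ≠ 0 →
      ((Finset.Icc 1 n').filter fun j => u ⬝ᵥ x (n' + j) = 0).card ≤ 2 ∧
      2 * n' - 2 ≤ ((Finset.Icc 1 (2 * n')).filter fun i => h (u ⬝ᵥ x i) = z i).card := by
  intro u hu
  have hcircle : ∀ j ∈ Finset.Icc 1 n',
      x (n' + j) = ![Real.cos (2 * Real.pi * j / n'), Real.sin (2 * Real.pi * j / n')] :=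
    fun j hj => hx1 j (Finset.mem_Icc.mp hj).1 (Finset.mem_Icc.mp hj).2
  have hzeros := Finset.card_filter_dotProduct_eq_zero_le_two _ (fun j => x (n' + j))
    ((injOn_cos_sin_two_pi_mul_div n').congr fun j hj => (hcircle j hj).symm)
    (fun j hj => by simp [hcircle j hj, dotProduct, Fin.sum_univ_two, ← sq]) hu
  refine ⟨hzeros, ?_⟩
  -- `h` can only misclassify the points `x (n' + j)` lying on the line `uᗮ`
  have hmiss : (Finset.Icc 1 (2 * n')).filter (fun i => ¬ h (u ⬝ᵥ x i) = z i) ⊆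
      ((Finset.Icc 1 n').filter fun j => u ⬝ᵥ x (n' + j) = 0).image (n' + ·) := by
    intro i hi
    simp only [Finset.mem_filter, Finset.mem_Icc, Finset.mem_image] at hi ⊢
    obtain ⟨⟨hi1, hi2⟩, hbad⟩ := hi
    by_cases hle : i ≤ n'
    · simp [hx0 i hi1 hle, hz0 i hi1 hle, hh] at hbad
    refine ⟨i - n', ⟨⟨by omega, by omega⟩, ?_⟩, by omega⟩
    rw [show n' + (i - n') = i by omega]
    by_contra hne
    exact hbad (by rw [hh, if_neg hne, hz1 i (by omega) hi2])
  have hsplit := Finset.card_filter_add_card_filter_not (s := Finset.Icc 1 (2 * n'))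
    (fun i => h (u ⬝ᵥ x i) = z i)
  rw [Nat.card_Icc] at hsplit
  have := (Finset.card_le_card hmiss).trans Finset.card_image_le
  omega

/-- For `n' ≥ 3`, consider the `2n'` points in `ℝ²` with `x i = 0` and `z i = 0`
for `i ∈ {1,…,n'}`, and `x (n'+j) = (cos(2πj/n'), sin(2πj/n'))` with `z (n'+j) = 1` for
`j ∈ {1,…,n'}`. Then for every nonzero `u ∈ ℝ²`, at most `2` indices `j ∈ {1,…,n'}` satisfy
`uᵀ x (n'+j) = 0`, and consequently the function `h(t) = 1[t ≠ 0]` satisfies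
`h(uᵀ x i) = z i` for at least `2n' − 2` of the `2n'` indices `i`. -/
theorem strict_fair_pca_infeasible (n' : ℕ) (hn : 3 ≤ n')
    (x : ℕ → Fin 2 → ℝ)
    (hx0 : ∀ i, 1 ≤ i → i ≤ n' → x i = 0)
    (hx1 : ∀ j, 1 ≤ j → j ≤ n' →
      x (n' + j) = ![Real.cos (2 * Real.pi * j / n'), Real.sin (2 * Real.pi * j / n')])
    (z : ℕ → ℝ)
    (hz0 : ∀ i, 1 ≤ i → i ≤ n' → z i = 0)
    (hz1 : ∀ i, n' + 1 ≤ i → i ≤ 2 * n' → z i = 1)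
    (h : ℝ → ℝ) (hh : ∀ t : ℝ, h t = if t = 0 then 0 else 1) :
    ∀ u : Fin 2 → ℝ, u ≠ 0 →
      ((Finset.Icc 1 n').filter fun j => u ⬝ᵥ x (n' + j) = 0).card ≤ 2 ∧
      2 * n' - 2 ≤ ((Finset.Icc 1 (2 * n')).filter fun i => h (u ⬝ᵥ x i) = z i).card :=
  strict_fair_pca_infeasible_general n' x hx0 hx1 z hz0 hz1 h hh
end

section
/- Let Z ∈ ℝ^{n×m} be the centered one-hot group-membership matrix for a partition of n datapoints into m disjoint nonempty groups G_1,…,G_m, and let X ∈ ℝ^{d×n} be the data matrix. Then for every U ∈ ℝ^{d×k}, the condition ZᵀXᵀU = 0 is equivalent to each of the following: (i) for every l ∈ {1,…,m}, (1/|G_l|)∑_{i∈G_l} Uᵀx_i = (1/(n−|G_l|))∑_{i∉G_l} Uᵀx_i; (ii) the group-conditional means of the projected data coincide for all groups, i.e., (1/|G_l|)∑_{i∈G_l} Uᵀx_i = (1/|G_{l'}|)∑_{i∈G_{l'}} Uᵀx_i for all l, l' ∈ {1,…,m}. -/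
/-
Row `l` of `ZᵀXᵀU` is `∑_{i ∈ G_l} Uᵀxᵢ - (|G_l| / n) ∑ᵢ Uᵀxᵢ`, so `ZᵀXᵀU = 0` says that every
group mean of the projected data equals the overall mean. The overall mean is the combination of
the mean over `G_l` and the mean over its complement with weights `|G_l| / n` and
`(n - |G_l|) / n`, both nonzero, which gives (i); it is also the `|G_l| / n`-weighted combination
of all group means, which gives (ii).
-/

open Matrix Finset

section Algebra

variable {K E : Type*} [Field K] [AddCommGroup E] [Module K E]

theorem one_div_smul_eq_one_div_smul_iff {a b : K} (ha : a ≠ 0) (hb : b ≠ 0) {x y : E} :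
    (1 / a) • x = (1 / b) • y ↔ b • x = a • y := by
  rw [one_div, one_div, inv_smul_eq_iff₀ ha, smul_comm, eq_inv_smul_iff₀ hb]

theorem one_div_smul_eq_one_div_sub_smul_sub_iff {c N : K} (hc : c ≠ 0) (hNc : N - c ≠ 0)
    {S T : E} : (1 / c) • S = (1 / (N - c)) • (T - S) ↔ N • S = c • T := by
  rw [one_div_smul_eq_one_div_smul_iff hc hNc, sub_smul, smul_sub, sub_eq_sub_iff_add_eq_add,
    add_left_inj]

end Algebra

section Fibers

variable {K E ι κ : Type*} [Field K] [AddCommGroup E] [Module K E] [Fintype ι]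
  [DecidableEq κ] {g : ι → κ}

theorem card_fiber_ne_zero [CharZero K] (hg : Function.Surjective g) (l : κ) :
    (#{i | g i = l} : K) ≠ 0 := by
  obtain ⟨i, hi⟩ := hg l
  exact Nat.cast_ne_zero.mpr (card_ne_zero_of_mem (mem_filter.mpr ⟨mem_univ i, hi⟩))

theorem card_sub_card_fiber_ne_zero [CharZero K] [Nontrivial κ] (hg : Function.Surjective g)
    (l : κ) : (Fintype.card ι : K) - #{i | g i = l} ≠ 0 := by
  obtain ⟨l', hl'⟩ := exists_ne l
  obtain ⟨i, hi⟩ := hg l'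
  have hlt : #{i | g i = l} < Fintype.card ι :=
    card_lt_card (filter_ssubset.mpr ⟨i, mem_univ i, hi.trans_ne hl'⟩)
  exact sub_ne_zero.mpr (Nat.cast_injective.ne hlt.ne')

variable (g) (y : ι → E)

theorem sum_smul_eq_zero_iff_of_centered [CharZero K] {Z : Matrix ι κ K}
    (hZ : ∀ i l, Z i l =
      (if g i = l then 1 else 0) - (∑ j, if g j = l then (1 : K) else 0) / Fintype.card ι)
    (l : κ) :
    ∑ i, Z i l • y i = 0 ↔
      (Fintype.card ι : K) • ∑ i with g i = l, y i = (#{i | g i = l} : K) • ∑ i, y i := by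
  rcases isEmpty_or_nonempty ι with _ | _
  · simp [univ_eq_empty]
  have hN : (Fintype.card ι : K) ≠ 0 := Nat.cast_ne_zero.mpr Fintype.card_ne_zero
  simp_rw [hZ, sum_boole, sub_smul, sum_sub_distrib, ite_smul, one_smul, zero_smul,
    ← sum_filter, ← smul_sum]
  rw [sub_eq_zero, div_eq_inv_mul, mul_smul, eq_inv_smul_iff₀ hN]

theorem mean_eq_mean_compl_iff {l : κ} (hc : (#{i | g i = l} : K) ≠ 0)
    (hNc : (Fintype.card ι : K) - #{i | g i = l} ≠ 0) :
    (1 / (#{i | g i = l} : K)) • ∑ i with g i = l, y i =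
        (1 / ((Fintype.card ι : K) - #{i | g i = l})) • ∑ i with g i ≠ l, y i ↔
      (Fintype.card ι : K) • ∑ i with g i = l, y i = (#{i | g i = l} : K) • ∑ i, y i := by
  have hcompl : ∑ i with g i ≠ l, y i = ∑ i, y i - ∑ i with g i = l, y i :=
    eq_sub_of_add_eq' (sum_filter_add_sum_filter_not _ _ _)
  rw [hcompl, one_div_smul_eq_one_div_sub_smul_sub_iff hc hNc]

theorem forall_mean_eq_mean_iff [CharZero K] [Fintype κ] (hc : ∀ l, (#{i | g i = l} : K) ≠ 0) :
    (∀ l l', (1 / (#{i | g i = l} : K)) • ∑ i with g i = l, y i =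
        (1 / (#{i | g i = l'} : K)) • ∑ i with g i = l', y i) ↔
      ∀ l, (Fintype.card ι : K) • ∑ i with g i = l, y i = (#{i | g i = l} : K) • ∑ i, y i := by
  constructor
  · intro h l
    set μ := (1 / (#{i | g i = l} : K)) • ∑ i with g i = l, y i
    have hS : ∀ l', ∑ i with g i = l', y i = (#{i | g i = l'} : K) • μ := fun l' =>
      (inv_smul_eq_iff₀ (hc l')).mp (by rw [← one_div]; exact h l' l)
    have hT : ∑ i, y i = (Fintype.card ι : K) • μ := calc
      ∑ i, y i = ∑ l', ∑ i with g i = l', y i := (sum_fiberwise univ g y).symm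
      _ = (∑ l', (#{i | g i = l'} : K)) • μ := by simp_rw [hS, sum_smul]
      _ = (Fintype.card ι : K) • μ := by
        rw [← Nat.cast_sum, ← card_eq_sum_card_fiberwise fun _ _ => mem_univ _, card_univ]
    rw [hT, hS l, smul_comm]
  · intro h l l'
    obtain ⟨i, -⟩ := card_ne_zero.mp (Nat.cast_ne_zero.mp (hc l))
    have : Nonempty ι := ⟨i⟩
    have hN : (Fintype.card ι : K) ≠ 0 := Nat.cast_ne_zero.mpr Fintype.card_ne_zero
    exact ((one_div_smul_eq_one_div_smul_iff (hc l) hN).mpr (h l)).trans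
      ((one_div_smul_eq_one_div_smul_iff (hc l') hN).mpr (h l')).symm

end Fibers

/-- With `Z ∈ ℝ^{n×m}` the centered one-hot group-membership matrix of a
partition into `m ≥ 2` disjoint nonempty groups `G_1, …, G_m` and `X ∈ ℝ^{d×n}` the data
matrix, for every `U ∈ ℝ^{d×k}` the condition `ZᵀXᵀU = 0` is equivalent to each of:
(i) for every group `l`, the mean of the projected points in `G_l` equals the mean of the
projected points outside `G_l`; (ii) the group-conditional means of the projected data
coincide for all pairs of groups. -/
theorem multi_group_means_iff (d n m k : ℕ) (hm : 2 ≤ m) (g : Fin n → Fin m)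
    (hg : Function.Surjective g)
    (X : Matrix (Fin d) (Fin n) ℝ) (Z : Matrix (Fin n) (Fin m) ℝ)
    (hZ : ∀ i l, Z i l =
      (if g i = l then 1 else 0) - (∑ j, if g j = l then (1 : ℝ) else 0) / n)
    (U : Matrix (Fin d) (Fin k) ℝ) :
    (Zᵀ * Xᵀ * U = 0 ↔
      ∀ l : Fin m,
        (1 / ((Finset.univ.filter fun i => g i = l).card : ℝ)) •
            ∑ i ∈ Finset.univ.filter fun i => g i = l, Uᵀ *ᵥ (fun r => X r i) =
          (1 / ((n : ℝ) - ((Finset.univ.filter fun i => g i = l).card : ℝ))) •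
            ∑ i ∈ Finset.univ.filter fun i => g i ≠ l, Uᵀ *ᵥ (fun r => X r i)) ∧
    (Zᵀ * Xᵀ * U = 0 ↔
      ∀ l l' : Fin m,
        (1 / ((Finset.univ.filter fun i => g i = l).card : ℝ)) •
            ∑ i ∈ Finset.univ.filter fun i => g i = l, Uᵀ *ᵥ (fun r => X r i) =
          (1 / ((Finset.univ.filter fun i => g i = l').card : ℝ)) •
            ∑ i ∈ Finset.univ.filter fun i => g i = l', Uᵀ *ᵥ (fun r => X r i)) := by
  have : Nontrivial (Fin m) := Fin.nontrivial_iff_two_le.mpr hm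
  set y : Fin n → Fin k → ℝ := fun i => Uᵀ *ᵥ fun r => X r i
  have hrows : Zᵀ * Xᵀ * U = 0 ↔ ∀ l, ∑ i, Z i l • y i = 0 := by
    rw [Matrix.mul_assoc]
    refine funext_iff.trans (forall_congr' fun l => ?_)
    simp only [y, mulVec_transpose]
    rw [mul_apply_eq_vecMul, vecMul_eq_sum]
    rfl
  have hcolumn := fun l => sum_smul_eq_zero_iff_of_centered g y
    (by simpa only [Fintype.card_fin] using hZ) l
  have hcore := hrows.trans (forall_congr' hcolumn)
  refine ⟨hcore.trans (forall_congr' fun l => ?_), hcore.trans ?_⟩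
  · rw [← mean_eq_mean_compl_iff g y (card_fiber_ne_zero hg l) (card_sub_card_fiber_ne_zero hg l),
      Fintype.card_fin]
  · exact (forall_mean_eq_mean_iff g y (card_fiber_ne_zero hg)).symm
end
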